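/- A graph G admits an exclusive sum labelling with r isolated vertices if and only if G is isomorphic to G₊(S,T) for some finite sets S, T of positive integers with |T| = r, where the disjointness of S and T may be dropped: for any finite sets S, T of positive integers there exists an integer shift making them disjoint without changing the isomorphism type, since G₊(S,T) ≅ G₊(S + {r}, T + {2r}) for every positive integer r. -/

import Mathlib

/-! A labelling realises `G` as `G₊(S,T)` exactly when the vertex labels form `S` and the sum of
two distinct vertex labels lies in `T` iff the vertices are adjacent. Reading `S` and `T` off an
exclusive sum labelling gives one direction. Conversely, shift `S` by `m` and `T` by `2m`, where
`m` bounds `S ∪ T`: vertex labels then lie in `[m, 2m)` and the added labels in `[2m, 3m)`, so a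
sum of two vertex labels can only be an added label, and a sum involving an added label exceeds
every label. -/

open SimpleGraph

/-- `G₊(S,T)`. -/
def GPlus (S T : Finset ℕ) : SimpleGraph {x // x ∈ S} :=
  SimpleGraph.fromRel (fun a b => (a : ℕ) + (b : ℕ) ∈ T)

/-- `G ∪ K̄_r`. -/
def addIsolated {V : Type*} (G : SimpleGraph V) (r : ℕ) : SimpleGraph (V ⊕ Fin r) :=
  SimpleGraph.fromRel (fun a b =>
    match a, b with
    | Sum.inl u, Sum.inl v => G.Adj u v
    | _, _ => False)

/-- The last clause says that no vertex of `G` is a working vertex. -/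
def IsExclusiveSumLabelling {V : Type*} (G : SimpleGraph V) (r : ℕ)
    (f : V ⊕ Fin r → ℕ) : Prop :=
  Function.Injective f ∧ (∀ x, 0 < f x) ∧
  (∀ a b, a ≠ b → ((addIsolated G r).Adj a b ↔ ∃ c, f c = f a + f b)) ∧
  (∀ u v : V, G.Adj u v → ∀ c, f c = f (Sum.inl u) + f (Sum.inl v) → ∃ i, c = Sum.inr i)

open Function

lemma gPlus_adj {S T : Finset ℕ} {a b : {x // x ∈ S}} :
    (GPlus S T).Adj a b ↔ a ≠ b ∧ (a : ℕ) + b ∈ T := by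
  rw [GPlus, fromRel_adj, add_comm (b : ℕ), or_self]

section

variable {V : Type*} (G : SimpleGraph V)

lemma addIsolated_adj_inl {r : ℕ} {u v : V} :
    (addIsolated G r).Adj (Sum.inl u) (Sum.inl v) ↔ G.Adj u v := by
  simp only [addIsolated, fromRel_adj, ne_eq, Sum.inl.injEq]
  exact ⟨fun ⟨_, h⟩ => h.elim id G.adj_symm, fun h => ⟨G.ne_of_adj h, Or.inl h⟩⟩

lemma addIsolated_not_adj_inr {r : ℕ} (a : V ⊕ Fin r) (i : Fin r) :
    ¬ (addIsolated G r).Adj a (Sum.inr i) := by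
  cases a <;> simp [addIsolated]

lemma nonempty_iso_gPlus_of_injective {l : V → ℕ} (hl : Injective l) {S T : Finset ℕ}
    (hS : Set.range l = S) (hG : ∀ u v, u ≠ v → (G.Adj u v ↔ l u + l v ∈ T)) :
    Nonempty (G ≃g GPlus S T) := by
  let e : V ≃ {x // x ∈ S} := (Equiv.ofInjective l hl).trans (Equiv.setCongr hS)
  refine ⟨⟨e, fun {u v} => ?_⟩⟩
  rw [gPlus_adj]
  change _ ∧ l u + l v ∈ T ↔ _
  by_cases huv : u = v
  · simp [huv]
  · rw [hG u v huv, and_iff_right (e.injective.ne huv)]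

lemma IsExclusiveSumLabelling.adj_iff {r : ℕ} {f : V ⊕ Fin r → ℕ}
    (hf : IsExclusiveSumLabelling G r f) {u v : V} (huv : u ≠ v) :
    G.Adj u v ↔ ∃ i, f (Sum.inr i) = f (Sum.inl u) + f (Sum.inl v) := by
  obtain ⟨_, _, hadj, hexcl⟩ := hf
  have hsum := hadj _ _ (Sum.inl_injective.ne huv)
  rw [addIsolated_adj_inl] at hsum
  refine ⟨fun h => ?_, fun ⟨i, hi⟩ => hsum.mpr ⟨_, hi⟩⟩
  obtain ⟨c, hc⟩ := hsum.mp h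
  obtain ⟨i, rfl⟩ := hexcl u v h c hc
  exact ⟨i, hc⟩

lemma isExclusiveSumLabelling_sumElim {r m : ℕ} {l : V → ℕ} {τ : Fin r → ℕ}
    (hm : 0 < m) (hl : Injective l) (hτ : Injective τ)
    (hl_mem : ∀ v, l v ∈ Set.Ico m (2 * m)) (hτ_mem : ∀ i, τ i ∈ Set.Ico (2 * m) (3 * m))
    (hG : ∀ u v, u ≠ v → (G.Adj u v ↔ l u + l v ∈ Set.range τ)) :
    IsExclusiveSumLabelling G r (Sum.elim l τ) := by
  simp only [Set.mem_Ico] at hl_mem hτ_mem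
  have hvert_sum : ∀ w u v, l w < l u + l v := fun w u v => by
    have := hl_mem w; have := hl_mem u; have := hl_mem v; omega
  have hadded_sum : ∀ c a i, Sum.elim l τ c < Sum.elim l τ a + τ i := by
    rintro (w | k) (u | k') i <;>
      simp only [Sum.elim_inl, Sum.elim_inr] <;>
      grind
  have hnone : ∀ a i, ¬ ∃ c, Sum.elim l τ c = Sum.elim l τ a + τ i :=
    fun a i ⟨c, hc⟩ => (hadded_sum c a i).ne hc
  refine ⟨hl.sumElim hτ fun v i => ?_, ?_, ?_, ?_⟩
  · have := hl_mem v; have := hτ_mem i; omega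
  · rintro (v | i)
    · exact hm.trans_le (hl_mem v).1
    · have := hτ_mem i
      exact show 0 < τ i by omega
  · rintro a (v | j) hne
    · rcases a with u | i
      · rw [addIsolated_adj_inl, hG u v (ne_of_apply_ne Sum.inl hne)]
        refine ⟨fun ⟨i, hi⟩ => ⟨Sum.inr i, hi⟩, ?_⟩
        rintro ⟨w | i, hc⟩
        · exact absurd hc (hvert_sum w u v).ne
        · exact ⟨i, hc⟩
      · rw [(addIsolated G r).adj_comm, Sum.elim_inr, add_comm]
        exact iff_of_false (addIsolated_not_adj_inr G _ i) (hnone _ i)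
    · exact iff_of_false (addIsolated_not_adj_inr G a j) (hnone a j)
  · rintro u v - (w | i) hc
    · exact absurd hc (hvert_sum w u v).ne
    · exact ⟨i, rfl⟩

lemma exists_isExclusiveSumLabelling_of_iso {r : ℕ} {S T : Finset ℕ} (hT : T.card = r)
    (e : G ≃g GPlus S T) : ∃ f, IsExclusiveSumLabelling G r f := by
  set m := (S ∪ T).sup id + 1
  have hlt : ∀ x ∈ S ∪ T, x < m := fun x hx => Nat.lt_succ_of_le (Finset.le_sup (f := id) hx)
  let t := T.orderEmbOfFin hT
  have hS_lt : ∀ v, (e v : ℕ) < m := fun v => hlt _ (Finset.mem_union_left _ (e v).2)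
  have hT_lt : ∀ i, t i < m := fun i => hlt _ (Finset.mem_union_right _ (T.orderEmbOfFin_mem hT i))
  refine ⟨_, isExclusiveSumLabelling_sumElim G (m := m) (l := fun v => e v + m)
    (τ := fun i => t i + 2 * m) Nat.succ_pos'
    ((add_left_injective m).comp (Subtype.val_injective.comp e.injective))
    ((add_left_injective _).comp t.injective)
    (fun v => ⟨by omega, by have := hS_lt v; omega⟩)
    (fun i => ⟨by omega, by have := hT_lt i; omega⟩) fun u v huv => ?_⟩
  rw [← e.map_adj_iff, gPlus_adj, and_iff_right (e.injective.ne huv), ← Finset.mem_coe,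
    ← T.range_orderEmbOfFin hT, show (e u : ℕ) + m + (e v + m) = e u + e v + 2 * m by ring]
  simp only [Set.mem_range, Nat.add_right_cancel_iff, t]

lemma IsExclusiveSumLabelling.nonempty_iso_gPlus [Fintype V] {r : ℕ} {f : V ⊕ Fin r → ℕ}
    (hf : IsExclusiveSumLabelling G r f) :
    Nonempty (G ≃g GPlus (Finset.univ.image (f ∘ Sum.inl)) (Finset.univ.image (f ∘ Sum.inr))) :=
  nonempty_iso_gPlus_of_injective G (hf.1.comp Sum.inl_injective)
    (by rw [Finset.coe_image, Finset.coe_univ, Set.image_univ]) fun u v huv => by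
      simp [hf.adj_iff G huv]

end

lemma nonempty_gPlus_iso_gPlus_image_add (S T : Finset ℕ) (m : ℕ) :
    Nonempty (GPlus S T ≃g GPlus (S.image (· + m)) (T.image (· + 2 * m))) :=
  nonempty_iso_gPlus_of_injective _ (l := fun x : {x // x ∈ S} => (x : ℕ) + m)
    ((add_left_injective m).comp Subtype.val_injective) (by ext; simp) fun a b hab => by
      rw [gPlus_adj, and_iff_right hab, show (a : ℕ) + m + (b + m) = a + b + 2 * m by ring,
        (add_left_injective _).mem_finset_image]

theorem stmt16 {V : Type*} [Fintype V] (G : SimpleGraph V) (r : ℕ) :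
    ((∃ f : V ⊕ Fin r → ℕ, IsExclusiveSumLabelling G r f) ↔
      ∃ S T : Finset ℕ, (∀ x ∈ S, 0 < x) ∧ (∀ x ∈ T, 0 < x) ∧ T.card = r ∧
        Nonempty (G ≃g GPlus S T)) ∧
    (∀ (S T : Finset ℕ) (m : ℕ), 0 < m →
      Nonempty (GPlus S T ≃g GPlus (S.image (· + m)) (T.image (· + 2 * m)))) := by
  refine ⟨⟨fun ⟨f, hf⟩ => ?_, fun ⟨S, T, _, _, hT, ⟨e⟩⟩ =>
    exists_isExclusiveSumLabelling_of_iso G hT e⟩,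
    fun S T m _ => nonempty_gPlus_iso_gPlus_image_add S T m⟩
  refine ⟨_, _, ?_, ?_, ?_, hf.nonempty_iso_gPlus G⟩
  · simpa using fun v => hf.2.1 (Sum.inl v)
  · simpa using fun i => hf.2.1 (Sum.inr i)
  · rw [Finset.card_image_of_injective _ (hf.1.comp Sum.inr_injective), Finset.card_univ,
      Fintype.card_fin]
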